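/- arXiv:2203.12011 — 5 statements merged into one kernel-verified Lean document; each statement's English description precedes it below -/
import Mathlib

section
/- Let N be even and b : {1,...,N} → {0,1} be match results with b_n + b_{N+1-n} = 1. Among all permutations r of {1,...,N} such that (i) winners never move down and losers never move up (r_n ≤ n if b_n = 1 and r_n ≥ n if b_n = 0), and (ii) the relative order among winners and among losers is preserved (for m < n with b_m = b_n, r_m < r_n), the permutation that lists all winners in their original order followed by all losers in their original order maximizes sum_{n=1}^N |r_n - n|. -/
/-!
Under (i) the total displacement is `∑_{losers} (r n - n) + ∑_{winners} (n - r n)`, and since `r`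
permutes `{1, …, N}` this equals `2 ∑_{winners} (n - r n)`. Maximizing it therefore means
minimizing `∑_{winners} r n`; as `r` is injective with positive values, this sum is at least
`1 + 2 + ⋯ + #winners`, and the winners-first ranking attains that bound.
-/

/-- The winners-first-then-losers re-ranking: the `k`-th winner (in original
order) gets rank `k`, and the losers follow in their original order. -/
def winnersFirst (N : ℕ) (b : ℕ → ℕ) (n : ℕ) : ℕ :=
  if b n = 1 then ((Finset.Icc 1 n).filter (fun m => b m = 1)).card
  else ((Finset.Icc 1 N).filter (fun m => b m = 1)).card
      + ((Finset.Icc 1 n).filter (fun m => b m = 0)).card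

open Finset

def totalDisplacement (s : Finset ℕ) (f : ℕ → ℕ) : ℕ := ∑ n ∈ s, ((f n : ℤ) - n).natAbs

theorem totalDisplacement_add_two_mul_sum {s W : Finset ℕ} {f : ℕ → ℕ} (hW : W ⊆ s)
    (hsum : ∑ n ∈ s, f n = ∑ n ∈ s, n) (hdown : ∀ n ∈ W, f n ≤ n)
    (hup : ∀ n ∈ s \ W, n ≤ f n) :
    totalDisplacement s f + 2 * ∑ n ∈ W, f n = 2 * ∑ n ∈ W, n := by
  have hsumZ := congrArg (Nat.cast : ℕ → ℤ) hsum
  push_cast at hsumZ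
  have hW' : ∑ n ∈ W, (((f n : ℤ) - n).natAbs : ℤ) = ∑ n ∈ W, ((n : ℤ) - f n) :=
    sum_congr rfl fun n hn => by have := hdown n hn; omega
  have hup' : ∑ n ∈ s \ W, (((f n : ℤ) - n).natAbs : ℤ) = ∑ n ∈ s \ W, ((f n : ℤ) - n) :=
    sum_congr rfl fun n hn => by have := hup n hn; omega
  zify
  rw [totalDisplacement, Nat.cast_sum, ← sum_sdiff hW, hW', hup']
  rw [← sum_sdiff hW, ← sum_sdiff hW (f := fun n : ℕ => (n : ℤ))] at hsumZ
  simp only [sum_sub_distrib]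
  linarith

theorem sum_eq_sum_of_bijOn_self {M : Type*} [AddCommMonoid M] {s : Finset M} {f : M → M}
    (hf : Set.BijOn f s s) :
    ∑ n ∈ s, f n = ∑ n ∈ s, n :=
  sum_nbij f hf.mapsTo hf.injOn hf.surjOn fun _ _ => rfl

theorem sum_range_succ_le_sum_of_injOn {s : Finset ℕ} {f : ℕ → ℕ} (hf : Set.InjOn f s)
    (hpos : ∀ n ∈ s, 0 < f n) :
    ∑ i ∈ range #s, (i + 1) ≤ ∑ n ∈ s, f n := by
  have hbound : ∀ x ∈ (s.image f).map Nat.castEmbedding, (1 : ℤ) ≤ x := by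
    simp only [mem_map, mem_image]
    rintro _ ⟨_, ⟨n, hn, rfl⟩, rfl⟩
    simpa using Nat.one_le_of_lt (hpos n hn)
  have := Finset.sum_range_le_sum hbound
  rw [card_map, card_image_of_injOn hf, sum_map, sum_image hf] at this
  simp only [Nat.castEmbedding_apply, add_comm (1 : ℤ)] at this
  exact_mod_cast this

theorem sum_card_filter_le_eq_sum_range {α : Type*} [LinearOrder α] (s : Finset α) :
    ∑ n ∈ s, #(s.filter (· ≤ n)) = ∑ i ∈ range #s, (i + 1) := by
  induction s using Finset.induction_on_max with
  | empty => simp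
  | insert a s ha ih =>
    have hna : a ∉ s := fun h => lt_irrefl a (ha a h)
    have htop : (insert a s).filter (· ≤ a) = insert a s :=
      filter_true_of_mem fun x hx => (mem_insert.mp hx).elim le_of_eq fun hx => (ha x hx).le
    have hrest : ∀ n ∈ s, (insert a s).filter (· ≤ n) = s.filter (· ≤ n) := fun n hn => by
      rw [filter_insert, if_neg (not_le.mpr (ha n hn))]
    rw [sum_insert hna, card_insert_of_notMem hna, sum_range_succ, htop,
      card_insert_of_notMem hna, sum_congr rfl fun n hn => congrArg card (hrest n hn), ih]
    ring

theorem filter_Icc_eq_filter_le (p : ℕ → Prop) [DecidablePred p] {a N n : ℕ} (hn : n ≤ N) :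
    (Icc a n).filter p = ((Icc a N).filter p).filter (· ≤ n) := by
  ext m
  simp only [mem_filter, mem_Icc]
  constructor
  · rintro ⟨⟨h1, h2⟩, hp⟩
    exact ⟨⟨⟨h1, h2.trans hn⟩, hp⟩, h2⟩
  · rintro ⟨⟨⟨h1, _⟩, hp⟩, h2⟩
    exact ⟨⟨h1, h2⟩, hp⟩

def winners (N : ℕ) (b : ℕ → ℕ) : Finset ℕ := (Icc 1 N).filter (b · = 1)

def losers (N : ℕ) (b : ℕ → ℕ) : Finset ℕ := (Icc 1 N).filter (b · = 0)

section

variable {N n : ℕ} {b : ℕ → ℕ}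

theorem winners_subset_Icc : winners N b ⊆ Icc 1 N := filter_subset _ _

theorem sdiff_winners_eq_losers (hb01 : ∀ n, b n = 0 ∨ b n = 1) :
    Icc 1 N \ winners N b = losers N b := by
  rw [winners, losers, ← filter_not]
  exact filter_congr fun n _ => by rcases hb01 n with h | h <;> simp [h]

theorem winnersFirst_of_mem_winners (hn : n ∈ winners N b) :
    winnersFirst N b n = #((winners N b).filter (· ≤ n)) := by
  obtain ⟨hnS, hbn⟩ := mem_filter.mp hn
  rw [winnersFirst, if_pos hbn, winners, filter_Icc_eq_filter_le _ (mem_Icc.mp hnS).2]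

theorem winnersFirst_of_mem_losers (hn : n ∈ losers N b) :
    winnersFirst N b n = #(winners N b) + #((losers N b).filter (· ≤ n)) := by
  obtain ⟨hnS, hbn⟩ := mem_filter.mp hn
  rw [winnersFirst, if_neg (by omega), winners, losers,
    filter_Icc_eq_filter_le _ (mem_Icc.mp hnS).2]

theorem winnersFirst_le_of_mem_winners (hn : n ∈ winners N b) : winnersFirst N b n ≤ n := by
  rw [winnersFirst, if_pos (mem_filter.mp hn).2]
  simpa using card_filter_le (Icc 1 n) _

theorem le_winnersFirst_of_mem_losers (hb01 : ∀ n, b n = 0 ∨ b n = 1)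
    (hn : n ∈ losers N b) : n ≤ winnersFirst N b n := by
  obtain ⟨hnS, hbn⟩ := mem_filter.mp hn
  have hcover : Icc 1 n ⊆ (Icc 1 n).filter (b · = 1) ∪ (Icc 1 n).filter (b · = 0) :=
    fun m hm => by rcases hb01 m with h | h <;> simp [hm, h]
  have hwin : #((Icc 1 n).filter (b · = 1)) ≤ #((Icc 1 N).filter (b · = 1)) :=
    card_le_card (filter_subset_filter _ (Icc_subset_Icc_right (mem_Icc.mp hnS).2))
  have := (card_le_card hcover).trans (card_union_le _ _)
  rw [winnersFirst, if_neg (by omega)]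
  simp only [Nat.card_Icc, add_tsub_cancel_right] at this
  omega

theorem sum_winnersFirst_winners :
    ∑ n ∈ winners N b, winnersFirst N b n = ∑ i ∈ range #(winners N b), (i + 1) := by
  rw [sum_congr rfl fun n hn => winnersFirst_of_mem_winners hn, sum_card_filter_le_eq_sum_range]

theorem sum_winnersFirst (hb01 : ∀ n, b n = 0 ∨ b n = 1) :
    ∑ n ∈ Icc 1 N, winnersFirst N b n = ∑ n ∈ Icc 1 N, n := by
  have hcard : #(winners N b) + #(losers N b) = N := by
    rw [← sdiff_winners_eq_losers hb01, card_sdiff_of_subset winners_subset_Icc, Nat.card_Icc]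
    have := card_le_card (winners_subset_Icc (N := N) (b := b))
    rw [Nat.card_Icc] at this
    omega
  have hIcc : ∑ n ∈ Icc 1 N, n = ∑ i ∈ range (#(winners N b) + #(losers N b)), (i + 1) := by
    rw [hcard, ← Ico_add_one_right_eq_Icc, sum_Ico_eq_sum_range]
    simp [add_comm]
  rw [← sum_sdiff winners_subset_Icc, sdiff_winners_eq_losers hb01, sum_winnersFirst_winners,
    sum_congr rfl fun n hn => winnersFirst_of_mem_losers hn, sum_add_distrib, sum_const,
    sum_card_filter_le_eq_sum_range, hIcc, sum_range_add]
  simp only [smul_eq_mul, sum_add_distrib, sum_const, card_range]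
  rw [sum_add_distrib, sum_const, card_range, smul_eq_mul]
  ring

end

theorem winnersFirst_maximizes_general (N : ℕ) (b : ℕ → ℕ)
    (hb01 : ∀ n, b n = 0 ∨ b n = 1)
    (r : ℕ → ℕ) (hr : Set.BijOn r (Set.Icc 1 N) (Set.Icc 1 N))
    (hwin : ∀ n ∈ Finset.Icc 1 N, b n = 1 → r n ≤ n)
    (hlose : ∀ n ∈ Finset.Icc 1 N, b n = 0 → n ≤ r n) :
    ∑ n ∈ Finset.Icc 1 N, ((r n : ℤ) - n).natAbs
      ≤ ∑ n ∈ Finset.Icc 1 N, ((winnersFirst N b n : ℤ) - n).natAbs := by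
  rw [← coe_Icc] at hr
  have hWS : winners N b ⊆ Icc 1 N := winners_subset_Icc
  have hr_disp := totalDisplacement_add_two_mul_sum hWS
    (sum_eq_sum_of_bijOn_self hr) (fun n hn => hwin n (hWS hn) (mem_filter.mp hn).2)
    (fun n hn => by
      rw [sdiff_winners_eq_losers hb01] at hn
      exact hlose n (filter_subset _ _ hn) (mem_filter.mp hn).2)
  have hwF_disp := totalDisplacement_add_two_mul_sum hWS (sum_winnersFirst hb01)
    (fun _ => winnersFirst_le_of_mem_winners)
    (fun _ hn => le_winnersFirst_of_mem_losers hb01 (sdiff_winners_eq_losers hb01 ▸ hn))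
  have hr_low : ∑ i ∈ range #(winners N b), (i + 1) ≤ ∑ n ∈ winners N b, r n :=
    sum_range_succ_le_sum_of_injOn (hr.injOn.mono hWS)
      (fun n hn => (mem_Icc.mp (hr.mapsTo (hWS hn))).1)
  rw [sum_winnersFirst_winners] at hwF_disp
  unfold totalDisplacement at hr_disp hwF_disp
  omega

/-- Among all re-rankings `r` of `{1,...,N}` such that winners
never move down, losers never move up, and the relative order among winners
(resp. losers) is preserved, the winners-first-then-losers permutation
maximizes `∑ |r n - n|`. -/
theorem winnersFirst_maximizes (N : ℕ) (hN : Even N) (hNpos : 0 < N) (b : ℕ → ℕ)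
    (hb01 : ∀ n, b n = 0 ∨ b n = 1)
    (hanti : ∀ n, 1 ≤ n → n ≤ N → b n + b (N + 1 - n) = 1)
    (r : ℕ → ℕ) (hr : Set.BijOn r (Set.Icc 1 N) (Set.Icc 1 N))
    (hwin : ∀ n ∈ Finset.Icc 1 N, b n = 1 → r n ≤ n)
    (hlose : ∀ n ∈ Finset.Icc 1 N, b n = 0 → n ≤ r n)
    (horder : ∀ m ∈ Finset.Icc 1 N, ∀ n ∈ Finset.Icc 1 N,
        m < n → b m = b n → r m < r n) :
    ∑ n ∈ Finset.Icc 1 N, ((r n : ℤ) - n).natAbs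
      ≤ ∑ n ∈ Finset.Icc 1 N, ((winnersFirst N b n : ℤ) - n).natAbs :=
  winnersFirst_maximizes_general N b hb01 r hr hwin hlose
end

section
/- Swapping one maximal consecutive block of losers with the immediately following maximal consecutive block of winners decreases the path change of the result sequence by exactly 2. -/
/-- Swapping one maximal consecutive block of losers `[i, j]`
with the immediately following maximal consecutive block of winners
`[j+1, l]` decreases the path change of the result sequence by exactly 2. -/
theorem block_swap_decreases_path_change (N : ℕ) (b b' : ℕ → ℕ)
    (hb01 : ∀ n, b n = 0 ∨ b n = 1)
    (h0 : b 0 = 1) (hN1 : b (N + 1) = 0)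
    (i j l : ℕ) (hi : 1 ≤ i) (hij : i ≤ j) (hjl : j < l) (hlN : l ≤ N)
    (hlosers : ∀ k, i ≤ k → k ≤ j → b k = 0)
    (hmaxl : b (i - 1) = 1)
    (hwinners : ∀ k, j + 1 ≤ k → k ≤ l → b k = 1)
    (hmaxw : b (l + 1) = 0)
    (hb'out : ∀ k, k < i ∨ l < k → b' k = b k)
    (hb'win : ∀ k, i ≤ k → k ≤ i + l - j - 1 → b' k = 1)
    (hb'lose : ∀ k, i + l - j ≤ k → k ≤ l → b' k = 0) :
    (∑ n ∈ Finset.Icc 1 (N + 1), ((b' n : ℤ) - b' (n - 1)).natAbs : ℤ)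
      = (∑ n ∈ Finset.Icc 1 (N + 1), ((b n : ℤ) - b (n - 1)).natAbs : ℤ) - 2 := by
  push_cast
  set f : ℕ → ℤ := fun n => |(b n : ℤ) - b (n-1)| with hf
  set f' : ℕ → ℤ := fun n => |(b' n : ℤ) - b' (n-1)| with hf'
  have hIcc : Finset.Icc 1 (N+1) = Finset.Ioc 0 (N+1) := by
    ext n; simp [Finset.mem_Icc, Finset.mem_Ioc]; omega
  rw [hIcc]
  have split : ∀ g : ℕ → ℤ, ∑ n ∈ Finset.Ioc 0 (N+1), g n =
      ∑ n ∈ Finset.Ioc 0 (i-1), g n + ∑ n ∈ Finset.Ioc (i-1) (l+1), g n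
        + ∑ n ∈ Finset.Ioc (l+1) (N+1), g n := by
    intro g
    rw [← Finset.sum_Ioc_consecutive g (Nat.zero_le (i-1)) (show i-1 ≤ N+1 by omega),
      ← Finset.sum_Ioc_consecutive g (show i-1 ≤ l+1 by omega) (show l+1 ≤ N+1 by omega),
      add_assoc]
  rw [split f, split f']
  have hleft : ∑ n ∈ Finset.Ioc 0 (i-1), f' n = ∑ n ∈ Finset.Ioc 0 (i-1), f n := by
    refine Finset.sum_congr rfl fun n hn => ?_
    simp only [Finset.mem_Ioc] at hn
    simp only [hf, hf', hb'out n (Or.inl (by omega)), hb'out (n-1) (Or.inl (by omega))]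
  have hright : ∑ n ∈ Finset.Ioc (l+1) (N+1), f' n = ∑ n ∈ Finset.Ioc (l+1) (N+1), f n := by
    refine Finset.sum_congr rfl fun n hn => ?_
    simp only [Finset.mem_Ioc] at hn
    simp only [hf, hf', hb'out n (Or.inr (by omega)), hb'out (n-1) (Or.inr (by omega))]
  have splitmid : ∀ g : ℕ → ℤ, ∀ m : ℕ, i - 1 ≤ m → m ≤ l →
      ∑ n ∈ Finset.Ioc (i-1) (l+1), g n =
      ∑ n ∈ Finset.Ioc (i-1) m, g n + ∑ n ∈ Finset.Ioc m l, g n + g (l+1) := by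
    intro g m h1 h2
    rw [Finset.sum_Ioc_consecutive g h1 h2]
    rw [show (Finset.Ioc (i-1) (l+1)) = insert (l+1) (Finset.Ioc (i-1) l) by
      ext n; simp [Finset.mem_Ioc, Finset.mem_insert]; omega]
    rw [Finset.sum_insert (by simp [Finset.mem_Ioc])]
    ring
  have hbmid : ∑ n ∈ Finset.Ioc (i-1) (l+1), f n = 3 := by
    rw [splitmid f j (by omega) (by omega)]
    have h1 : ∑ n ∈ Finset.Ioc (i-1) j, f n = 1 := by
      rw [Finset.sum_eq_single_of_mem i (by simp [Finset.mem_Ioc]; omega)]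
      · simp only [hf, hlosers i le_rfl hij, hmaxl]; norm_num
      · intro n hn hne
        simp only [Finset.mem_Ioc] at hn
        simp only [hf, hlosers n (by omega) hn.2, hlosers (n-1) (by omega) (by omega)]
        norm_num
    have h2 : ∑ n ∈ Finset.Ioc j l, f n = 1 := by
      rw [Finset.sum_eq_single_of_mem (j+1) (by simp [Finset.mem_Ioc]; omega)]
      · simp only [hf, hwinners (j+1) le_rfl (by omega),
          show j + 1 - 1 = j from rfl, hlosers j hij le_rfl]; norm_num
      · intro n hn hne
        simp only [Finset.mem_Ioc] at hn
        simp only [hf, hwinners n (by omega) hn.2, hwinners (n-1) (by omega) (by omega)]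
        norm_num
    have h3 : f (l+1) = 1 := by
      simp only [hf, hmaxw, show l + 1 - 1 = l from rfl, hwinners l (by omega) le_rfl]
      norm_num
    rw [h1, h2, h3]; norm_num
  have hb'mid : ∑ n ∈ Finset.Ioc (i-1) (l+1), f' n = 1 := by
    have hm1 : i + l - j - 1 ≤ l := by omega
    have hm2 : i - 1 ≤ i + l - j - 1 := by omega
    rw [splitmid f' (i + l - j - 1) hm2 hm1]
    have h1 : ∑ n ∈ Finset.Ioc (i-1) (i+l-j-1), f' n = 0 := by
      refine Finset.sum_eq_zero fun n hn => ?_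
      simp only [Finset.mem_Ioc] at hn
      have hbn : b' n = 1 := hb'win n (by omega) hn.2
      have hbn1 : b' (n-1) = 1 := by
        rcases eq_or_lt_of_le (show i ≤ n by omega) with h | h
        · rw [show n - 1 = i - 1 by omega, hb'out (i-1) (Or.inl (by omega)), hmaxl]
        · exact hb'win (n-1) (by omega) (by omega)
      simp [hf', hbn, hbn1]
    have h2 : ∑ n ∈ Finset.Ioc (i+l-j-1) l, f' n = 1 := by
      rw [Finset.sum_eq_single_of_mem (i+l-j) (by simp [Finset.mem_Ioc]; omega)]
      · simp only [hf', hb'lose (i+l-j) le_rfl (by omega),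
          hb'win (i+l-j-1) (by omega) le_rfl]
        norm_num
      · intro n hn hne
        simp only [Finset.mem_Ioc] at hn
        simp only [hf', hb'lose n (by omega) hn.2, hb'lose (n-1) (by omega) (by omega)]
        norm_num
    have h3 : f' (l+1) = 0 := by
      simp only [hf', hb'out (l+1) (Or.inr (by omega)), hmaxw,
        show l + 1 - 1 = l from rfl, hb'lose l (by omega) le_rfl]
      norm_num
    rw [h1, h2, h3]; norm_num
  rw [hleft, hright, hbmid, hb'mid]; ring
end

section
/- Let N ≥ 2 be even and M ≥ 1. Any sequence N_0 = N, N_1, ..., N_{M-1} = 2 of even positive integers that is strictly decreasing (at least 2 eliminated per round), satisfies N_t ≤ 2·N_{t+1} for all t, and minimizes sum_{t=1}^{M-2} |(N_t - N_{t+1}) - (N_{t-1} - N_t)| among such sequences, must have nonincreasing per-round eliminations: N_t - N_{t+1} ≤ N_{t-1} - N_t for all 1 ≤ t ≤ M-2. -/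
/-!
Sorting the eliminations `d_t = N_t - N_{t+1}` of a valid schedule into nonincreasing order gives
a valid schedule again: the halving constraint says that each elimination is at most `2` plus the
sum of the later ones, and this property survives insertion sort. The sorted schedule has
variation `d_max - d_min ≤ d_max - 2`. In a valid schedule the last elimination is forced to be
`2` (from `4` players to `2`), so a schedule with an increase `d_a < d_{a+1}` has variation at
least `(d_max - 2) + (d_{a+1} - d_a) > d_max - 2` and is not optimal.
-/

open Finset

theorem sum_range_abs_sub_eq_of_succ_le {g : ℕ → ℤ} {n : ℕ} (h : ∀ i < n, g (i + 1) ≤ g i) :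
    ∑ i ∈ range n, |g (i + 1) - g i| = g 0 - g n := by
  rw [← sum_range_sub' g n]
  refine sum_congr rfl fun i hi => ?_
  rw [abs_sub_comm, abs_of_nonneg (sub_nonneg.2 (h i (mem_range.1 hi)))]

/- The variation is the net descent `g 0 - g n` plus twice the total ascent, and the total ascent
dominates both the rise `g j - g 0` and the single rise `g (a + 1) - g a`. -/
theorem sub_add_sub_le_sum_range_abs_sub (g : ℕ → ℤ) {n j a : ℕ} (hj : j ≤ n) (ha : a < n) :
    g j - g n + (g (a + 1) - g a) ≤ ∑ i ∈ range n, |g (i + 1) - g i| := by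
  set ascent := ∑ i ∈ range n, max (g (i + 1) - g i) 0
  have hvar : ∑ i ∈ range n, |g (i + 1) - g i| = 2 * ascent - (g n - g 0) := by
    rw [← sum_range_sub g n, mul_sum, ← sum_sub_distrib]
    refine sum_congr rfl fun i _ => ?_
    rw [abs_eq_max_neg]
    omega
  have hrise : g j - g 0 ≤ ascent :=
    calc g j - g 0 = ∑ i ∈ range j, (g (i + 1) - g i) := (sum_range_sub g j).symm
      _ ≤ ∑ i ∈ range j, max (g (i + 1) - g i) 0 := sum_le_sum fun _ _ => le_max_left _ _
      _ ≤ ascent := sum_le_sum_of_subset_of_nonneg (range_subset_range.2 hj)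
          fun _ _ _ => le_max_right _ _
  have hstep : g (a + 1) - g a ≤ ascent :=
    (le_max_left _ 0).trans
      (single_le_sum (f := fun i => max (g (i + 1) - g i) 0) (fun _ _ => le_max_right _ _)
        (mem_range.2 ha))
  linarith

/-- With `d_t = N_t - N_{t+1}` and `N_{t+1} = 2 + ∑_{s > t} d_s`, the halving constraint
`N_t ≤ 2 N_{t+1}` reads `d_t ≤ 2 + ∑_{s > t} d_s`, i.e. `SuffixBounded 2 [d_0, d_1, …]`. -/
def SuffixBounded (c : ℕ) : List ℕ → Prop
  | [] => True
  | x :: l => x ≤ c + l.sum ∧ SuffixBounded c l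

namespace SuffixBounded

variable {c : ℕ}

theorem iff_getElem {l : List ℕ} :
    SuffixBounded c l ↔ ∀ t (ht : t < l.length), l[t] ≤ c + (l.drop (t + 1)).sum := by
  induction l with
  | nil => simp [SuffixBounded]
  | cons x l ih =>
    simp only [SuffixBounded, ih, List.length_cons]
    constructor
    · rintro ⟨hx, hl⟩ (_ | t) ht
      · simpa using hx
      · simpa using hl t (by omega)
    · intro h
      exact ⟨by simpa using h 0 (by omega), fun t ht => h (t + 1) (by omega)⟩

/- Moving `x` behind a larger `y` only enlarges the sum after `y`, and `x < y ≤ c + l.sum`. -/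
theorem orderedInsert {x : ℕ} : ∀ {l : List ℕ}, SuffixBounded c l → x ≤ c + l.sum →
    SuffixBounded c (l.orderedInsert (· ≥ ·) x)
  | [], _, hx => ⟨hx, trivial⟩
  | y :: l, ⟨hy, hl⟩, hx => by
    by_cases hxy : x ≥ y
    · rw [List.orderedInsert_cons, if_pos hxy]
      exact ⟨hx, hy, hl⟩
    · rw [List.orderedInsert_cons, if_neg hxy, SuffixBounded,
        (List.perm_orderedInsert _ _ _).sum_eq, List.sum_cons]
      exact ⟨by omega, orderedInsert hl (by omega)⟩

theorem insertionSort : ∀ {l : List ℕ}, SuffixBounded c l →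
    SuffixBounded c (l.insertionSort (· ≥ ·))
  | [], _ => trivial
  | _ :: _, ⟨hx, hl⟩ => by
    rw [List.insertionSort_cons]
    exact hl.insertionSort.orderedInsert (by rwa [(List.perm_insertionSort _ _).sum_eq])

end SuffixBounded

/-- `K` is the index of the final state `Ns K = 2`, i.e. `M - 1` in the paper. -/
structure IsSchedule (N K : ℕ) (Ns : ℕ → ℕ) : Prop where
  zero : Ns 0 = N
  last : Ns K = 2
  even : ∀ t ≤ K, Even (Ns t)
  lt : ∀ t < K, Ns (t + 1) < Ns t
  le_two_mul : ∀ t < K, Ns t ≤ 2 * Ns (t + 1)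

def elimination (Ns : ℕ → ℕ) (t : ℕ) : ℤ := Ns t - Ns (t + 1)

def eliminations (Ns : ℕ → ℕ) (K : ℕ) : List ℕ := (List.range K).map fun t => Ns t - Ns (t + 1)

def ofEliminations (l : List ℕ) (t : ℕ) : ℕ := 2 + (l.drop t).sum

theorem sum_map_range'_tsub_add (Ns : ℕ → ℕ) : ∀ {t n : ℕ},
    (∀ i, t ≤ i → i < t + n → Ns (i + 1) ≤ Ns i) →
    ((List.range' t n).map fun i => Ns i - Ns (i + 1)).sum + Ns (t + n) = Ns t
  | _, 0, _ => by simp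
  | t, n + 1, h => by
    have ih := sum_map_range'_tsub_add Ns (t := t + 1) (n := n) fun i _ _ =>
      h i (by omega) (by omega)
    have ht := h t le_rfl (by omega)
    rw [List.range'_succ, List.map_cons, List.sum_cons, add_assoc, ← add_assoc t,
      Nat.add_right_comm, ih]
    omega

namespace IsSchedule

variable {N K : ℕ} {Ns : ℕ → ℕ}

theorem two_add_sum_drop_eliminations (hs : IsSchedule N K Ns) {t : ℕ} (ht : t ≤ K) :
    2 + ((eliminations Ns K).drop t).sum = Ns t := by
  rw [eliminations, ← List.map_drop, List.range_eq_range', List.drop_range', ← hs.last]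
  simpa [add_comm, Nat.add_sub_cancel' ht] using
    sum_map_range'_tsub_add Ns (t := t) (n := K - t) fun i _ hi => (hs.lt i (by omega)).le

theorem two_add_sum_eliminations (hs : IsSchedule N K Ns) : 2 + (eliminations Ns K).sum = N := by
  simpa [hs.zero] using hs.two_add_sum_drop_eliminations (Nat.zero_le K)

theorem even_and_two_le_of_mem_eliminations (hs : IsSchedule N K Ns) :
    ∀ x ∈ eliminations Ns K, Even x ∧ 2 ≤ x := by
  simp only [eliminations, List.forall_mem_map, List.mem_range]
  intro t ht
  have hlt := hs.lt t ht
  obtain ⟨a, ha⟩ := hs.even t ht.le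
  obtain ⟨b, hb⟩ := hs.even (t + 1) ht
  exact ⟨⟨a - b, by omega⟩, by omega⟩

theorem suffixBounded_eliminations (hs : IsSchedule N K Ns) :
    SuffixBounded 2 (eliminations Ns K) := by
  rw [SuffixBounded.iff_getElem]
  intro t ht
  have htK : t < K := by simpa [eliminations] using ht
  rw [hs.two_add_sum_drop_eliminations (t := t + 1) htK]
  simp only [eliminations, List.getElem_map, List.getElem_range]
  have := hs.le_two_mul t htK
  omega

theorem exists_elimination_eq_of_mem (hs : IsSchedule N K Ns) {x : ℕ}
    (hx : x ∈ eliminations Ns K) : ∃ j < K, elimination Ns j = x := by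
  obtain ⟨j, hj, rfl⟩ := List.mem_map.1 hx
  have hj : j < K := List.mem_range.1 hj
  exact ⟨j, hj, by rw [elimination, Nat.cast_sub (hs.lt j hj).le]⟩

theorem elimination_sub_one_eq_two (hs : IsSchedule N K Ns) (hK : 1 ≤ K) :
    elimination Ns (K - 1) = 2 := by
  have hlt := hs.lt (K - 1) (by omega)
  have hle := hs.le_two_mul (K - 1) (by omega)
  obtain ⟨a, ha⟩ := hs.even (K - 1) (by omega)
  rw [Nat.sub_add_cancel hK, hs.last] at hlt hle
  rw [elimination, Nat.sub_add_cancel hK, hs.last]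
  omega

theorem elimination_sub_two_lt_sum_range_abs_sub (hs : IsSchedule N K Ns) {j a : ℕ} (hj : j < K)
    (ha : a + 1 < K) (hasc : elimination Ns a < elimination Ns (a + 1)) :
    elimination Ns j - 2 < ∑ i ∈ range (K - 1), |elimination Ns (i + 1) - elimination Ns i| := by
  have := sub_add_sub_le_sum_range_abs_sub (elimination Ns) (n := K - 1) (j := j) (a := a)
    (by omega) (by omega)
  rw [hs.elimination_sub_one_eq_two (by omega)] at this
  linarith

end IsSchedule

theorem ofEliminations_eq_add {l : List ℕ} {t : ℕ} (ht : t < l.length) :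
    ofEliminations l t = l[t] + ofEliminations l (t + 1) := by
  rw [ofEliminations, ofEliminations, List.drop_eq_getElem_cons ht, List.sum_cons]
  ring

theorem elimination_ofEliminations {l : List ℕ} {t : ℕ} (ht : t < l.length) :
    elimination (ofEliminations l) t = l[t] := by
  rw [elimination, ofEliminations_eq_add ht]
  push_cast
  ring

theorem isSchedule_ofEliminations {N : ℕ} {l : List ℕ} (hmem : ∀ x ∈ l, Even x ∧ 2 ≤ x)
    (hsum : 2 + l.sum = N) (hb : SuffixBounded 2 l) :
    IsSchedule N l.length (ofEliminations l) where
  zero := hsum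
  last := by simp [ofEliminations]
  even t _ := even_two.add <| even_iff_two_dvd.2 <| List.dvd_sum fun x hx =>
    even_iff_two_dvd.1 (hmem x (List.mem_of_mem_drop hx)).1
  lt t ht := by
    have := (hmem _ (l.getElem_mem ht)).2
    rw [ofEliminations_eq_add ht]
    omega
  le_two_mul t ht := by
    have := SuffixBounded.iff_getElem.1 hb t ht
    rw [ofEliminations_eq_add ht, ofEliminations]
    omega

theorem sum_range_abs_sub_elimination_ofEliminations {l : List ℕ} (hl : l ≠ [])
    (hsorted : l.Pairwise (· ≥ ·)) (hmem : ∀ x ∈ l, 2 ≤ x) :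
    ∑ i ∈ range (l.length - 1), |elimination (ofEliminations l) (i + 1) -
      elimination (ofEliminations l) i| ≤ l[0]'(List.length_pos_iff.2 hl) - 2 := by
  have hlen := List.length_pos_iff.2 hl
  rw [sum_range_abs_sub_eq_of_succ_le fun i hi => ?_, elimination_ofEliminations hlen,
    elimination_ofEliminations (by omega)]
  · have := hmem _ (l.getElem_mem (by omega : l.length - 1 < l.length))
    omega
  · rw [elimination_ofEliminations (by omega), elimination_ofEliminations (by omega)]
    exact_mod_cast List.pairwise_iff_getElem.1 hsorted i (i + 1) _ _ (by omega)

theorem natCast_sum_Icc_natAbs (Ns : ℕ → ℕ) (n : ℕ) :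
    ((∑ t ∈ Icc 1 n, (((Ns t : ℤ) - Ns (t + 1)) - ((Ns (t - 1) : ℤ) - Ns t)).natAbs : ℕ) : ℤ) =
      ∑ i ∈ range n, |elimination Ns (i + 1) - elimination Ns i| := by
  rw [← Ico_add_one_right_eq_Icc, sum_Ico_eq_sum_range, Nat.add_sub_cancel, Nat.cast_sum]
  refine sum_congr rfl fun i _ => ?_
  rw [Nat.cast_natAbs, Int.cast_abs, add_comm 1 i, Nat.add_sub_cancel]
  rfl

theorem optimal_schedule_noninc_general (N M : ℕ)
    (Ns : ℕ → ℕ)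
    (h0 : Ns 0 = N) (hlast : Ns (M - 1) = 2)
    (heven : ∀ t ≤ M - 1, Even (Ns t))
    (hdec : ∀ t < M - 1, Ns (t + 1) < Ns t)
    (hhalf : ∀ t < M - 1, Ns t ≤ 2 * Ns (t + 1))
    (hmin : ∀ Ns' : ℕ → ℕ,
        Ns' 0 = N → Ns' (M - 1) = 2 →
        (∀ t ≤ M - 1, Even (Ns' t)) →
        (∀ t < M - 1, Ns' (t + 1) < Ns' t) →
        (∀ t < M - 1, Ns' t ≤ 2 * Ns' (t + 1)) →
        ∑ t ∈ Finset.Icc 1 (M - 2),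
            (((Ns t : ℤ) - Ns (t + 1)) - ((Ns (t - 1) : ℤ) - Ns t)).natAbs
          ≤ ∑ t ∈ Finset.Icc 1 (M - 2),
            (((Ns' t : ℤ) - Ns' (t + 1)) - ((Ns' (t - 1) : ℤ) - Ns' t)).natAbs) :
    ∀ t, 1 ≤ t → t ≤ M - 2 →
      (Ns t : ℤ) - Ns (t + 1) ≤ (Ns (t - 1) : ℤ) - Ns t := by
  intro t ht1 ht2
  by_contra! hasc
  have hs : IsSchedule N (M - 1) Ns := ⟨h0, hlast, heven, hdec, hhalf⟩
  set l := (eliminations Ns (M - 1)).insertionSort (· ≥ ·)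
  have hperm : l.Perm (eliminations Ns (M - 1)) := List.perm_insertionSort _ _
  have hlen : l.length = M - 1 := by simp [hperm.length_eq, eliminations]
  have hmem : ∀ x ∈ l, Even x ∧ 2 ≤ x := fun x hx =>
    hs.even_and_two_le_of_mem_eliminations x (hperm.subset hx)
  have hs' : IsSchedule N (M - 1) (ofEliminations l) := hlen ▸ isSchedule_ofEliminations hmem
    (hperm.sum_eq ▸ hs.two_add_sum_eliminations) hs.suffixBounded_eliminations.insertionSort
  have hl : l ≠ [] := List.ne_nil_of_length_pos (by omega)
  obtain ⟨j, hj, hjl⟩ := hs.exists_elimination_eq_of_mem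
    (hperm.subset (l.getElem_mem (List.length_pos_iff.2 hl)))
  have hlow := hs.elimination_sub_two_lt_sum_range_abs_sub hj (a := t - 1) (by omega)
    (by rwa [elimination, elimination, Nat.sub_add_cancel ht1])
  have hup := sum_range_abs_sub_elimination_ofEliminations hl (List.pairwise_insertionSort _ _)
    fun x hx => (hmem x hx).2
  have hopt := Nat.cast_le (α := ℤ).2 (hmin _ hs'.zero hs'.last hs'.even hs'.lt hs'.le_two_mul)
  rw [natCast_sum_Icc_natAbs, natCast_sum_Icc_natAbs, show M - 2 = M - 1 - 1 by omega] at hopt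
  rw [← hjl, hlen] at hup
  omega

/-- Lemma 1: Any valid elimination schedule minimizing the total
variation of the per-round eliminations has nonincreasing eliminations. -/
theorem optimal_schedule_noninc (N M : ℕ) (hN : Even N) (hN2 : 2 ≤ N) (hM : 1 ≤ M)
    (Ns : ℕ → ℕ)
    (h0 : Ns 0 = N) (hlast : Ns (M - 1) = 2)
    (heven : ∀ t ≤ M - 1, Even (Ns t))
    (hdec : ∀ t < M - 1, Ns (t + 1) < Ns t)
    (hhalf : ∀ t < M - 1, Ns t ≤ 2 * Ns (t + 1))
    (hmin : ∀ Ns' : ℕ → ℕ,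
        Ns' 0 = N → Ns' (M - 1) = 2 →
        (∀ t ≤ M - 1, Even (Ns' t)) →
        (∀ t < M - 1, Ns' (t + 1) < Ns' t) →
        (∀ t < M - 1, Ns' t ≤ 2 * Ns' (t + 1)) →
        ∑ t ∈ Finset.Icc 1 (M - 2),
            (((Ns t : ℤ) - Ns (t + 1)) - ((Ns (t - 1) : ℤ) - Ns t)).natAbs
          ≤ ∑ t ∈ Finset.Icc 1 (M - 2),
            (((Ns' t : ℤ) - Ns' (t + 1)) - ((Ns' (t - 1) : ℤ) - Ns' t)).natAbs) :
    ∀ t, 1 ≤ t → t ≤ M - 2 →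
      (Ns t : ℤ) - Ns (t + 1) ≤ (Ns (t - 1) : ℤ) - Ns t :=
  optimal_schedule_noninc_general N M Ns h0 hlast heven hdec hhalf hmin
end

section
/- For N even with N ≥ 2, M ≥ 2, and 2^{M-1} ≥ N/2 (so a valid schedule exists), the sequence produced by the greedy backward construction is a valid elimination schedule: it satisfies N*_0 = N, N*_{M-1} = 2, every term even, strictly decreasing by at least 2, and N*_t ≤ 2·N*_{t+1} for all t. -/
/-- The greedy backward construction: `greedy N M k` is `N*_{M-1-k}`, starting
from `N*_{M-1} = 2` and, for `m = M-1` down to `2`, setting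
`δ = 2⌊(N - N*_m)/(2m)⌋` and `N*_{m-1} = 2 N*_m` if `δ ≥ N*_m`, else
`N*_{m-1} = N*_m + δ`. -/
def greedy (N M : ℕ) : ℕ → ℕ
  | 0 => 2
  | k + 1 =>
      let g := greedy N M k
      let m := M - 1 - k
      let δ := 2 * ((N - g) / (2 * m))
      if g ≤ δ then 2 * g else g + δ

/-- The resulting schedule: `N*_0 = N` and `N*_t = greedy N M (M-1-t)` for `t ≥ 1`. -/
def Nstar (N M t : ℕ) : ℕ := if t = 0 then N else greedy N M (M - 1 - t)

/-! Two invariants drive the proof. Going backwards, the term `N*_t` (for `t ≥ 1`) keeps room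
for the remaining `t` rounds, `N*_t + 2t ≤ N`, so the quotient `⌊(N - N*_t)/(2t)⌋` is at least
`1` and every round eliminates at least two. It also stays large enough to be doubled back up
to `N`, `N ≤ 2^t N*_t`, so the final gap `N*_1 → N*_0 = N` is at most a halving. -/

/-- One backward step `N*_m ↦ N*_{m-1}` of the greedy construction. -/
def greedyStep (N m g : ℕ) : ℕ :=
  if g ≤ 2 * ((N - g) / (2 * m)) then 2 * g else g + 2 * ((N - g) / (2 * m))

section GreedyStep

variable {N m g : ℕ}

theorem greedyStep_le_two_mul : greedyStep N m g ≤ 2 * g := by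
  unfold greedyStep; split_ifs <;> omega

theorem greedyStep_le_add : greedyStep N m g ≤ g + 2 * ((N - g) / (2 * m)) := by
  unfold greedyStep; split_ifs <;> omega

theorem two_le_greedyStep (hg : 2 ≤ g) : 2 ≤ greedyStep N m g := by
  unfold greedyStep; split_ifs <;> omega

theorem even_greedyStep (hg : Even g) : Even (greedyStep N m g) := by
  unfold greedyStep; split_ifs
  · exact even_two_mul g
  · exact hg.add (even_two_mul _)

theorem one_le_div_of_add_le (hm : 0 < m) (hroom : g + 2 * m ≤ N) :
    1 ≤ (N - g) / (2 * m) :=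
  (Nat.one_le_div_iff (by omega)).mpr (by omega)

theorem add_two_le_greedyStep (hg : 2 ≤ g) (hm : 0 < m) (hroom : g + 2 * m ≤ N) :
    g + 2 ≤ greedyStep N m g := by
  have hq := one_le_div_of_add_le hm hroom
  unfold greedyStep; split_ifs <;> omega

theorem greedyStep_add_le (hroom : g + 2 * (m + 1) ≤ N) :
    greedyStep N (m + 1) g + 2 * m ≤ N := by
  set q := (N - g) / (2 * (m + 1))
  have hq : 1 ≤ q := one_le_div_of_add_le m.succ_pos hroom
  have hdiv : 2 * (m + 1) * q ≤ N - g := Nat.mul_div_le _ _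
  have hmq : m ≤ m * q := Nat.le_mul_of_pos_right m hq
  have hstep : greedyStep N (m + 1) g ≤ g + 2 * q := greedyStep_le_add
  have hexp : 2 * (m + 1) * q = 2 * (m * q) + 2 * q := by ring
  omega

theorem le_two_pow_mul_greedyStep (hN : Even N) (hg : Even g) (hg2 : 2 ≤ g)
    (hreach : N ≤ 2 ^ (m + 1) * g) : N ≤ 2 ^ m * greedyStep N (m + 1) g := by
  unfold greedyStep
  set q := (N - g) / (2 * (m + 1))
  split_ifs
  · calc N ≤ 2 ^ (m + 1) * g := hreach
      _ = 2 ^ m * (2 * g) := by ring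
  · -- `N - g` is even, so its remainder modulo `2(m+1)` is at most `2m`.
    have hlt : N - g < 2 * (m + 1) * (q + 1) := Nat.lt_mul_div_succ _ (by omega)
    have hmg : m * 2 ≤ m * g := Nat.mul_le_mul_left m hg2
    have hbound : N ≤ (m + 1) * (g + 2 * q) := by
      rw [Nat.even_iff] at hN hg
      have hl : 2 * (m + 1) * (q + 1) = 2 * (m * q) + 2 * q + 2 * m + 2 := by ring
      have hr : (m + 1) * (g + 2 * q) = g + 2 * q + m * g + 2 * (m * q) := by ring
      omega
    calc N ≤ (m + 1) * (g + 2 * q) := hbound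
      _ ≤ 2 ^ m * (g + 2 * q) := Nat.mul_le_mul_right _ Nat.lt_two_pow_self

end GreedyStep

theorem greedy_succ (N M k : ℕ) :
    greedy N M (k + 1) = greedyStep N (M - 1 - k) (greedy N M k) := rfl

theorem two_le_greedy (N M k : ℕ) : 2 ≤ greedy N M k := by
  induction k with
  | zero => exact le_rfl
  | succ k ih => exact two_le_greedyStep ih

theorem even_greedy (N M k : ℕ) : Even (greedy N M k) := by
  induction k with
  | zero => exact even_two
  | succ k ih => exact even_greedyStep ih

section Nstar

variable {N M t : ℕ}

theorem even_Nstar (hN : Even N) : Even (Nstar N M t) := by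
  unfold Nstar; split_ifs
  · exact hN
  · exact even_greedy N M _

theorem two_le_Nstar (ht : 0 < t) : 2 ≤ Nstar N M t := by
  rw [Nstar, if_neg ht.ne']; exact two_le_greedy N M _

theorem Nstar_sub_one (hM : 2 ≤ M) : Nstar N M (M - 1) = 2 := by
  rw [Nstar, if_neg (by omega), Nat.sub_self]; rfl

theorem Nstar_eq_greedyStep (ht : 0 < t) (htM : t < M - 1) :
    Nstar N M t = greedyStep N (t + 1) (Nstar N M (t + 1)) := by
  have hk : M - 1 - t = M - 1 - (t + 1) + 1 := by omega
  have hm : M - 1 - (M - 1 - (t + 1)) = t + 1 := by omega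
  rw [Nstar, Nstar, if_neg ht.ne', if_neg t.succ_ne_zero, hk, greedy_succ, hm]

theorem Nstar_add_two_mul_le (hM : 2 ≤ M) (h2M : 2 * M ≤ N) (ht : 0 < t) (htM : t ≤ M - 1) :
    Nstar N M t + 2 * t ≤ N := by
  induction htM using Nat.decreasingInduction with
  | self => rw [Nstar_sub_one hM]; omega
  | of_succ k hk ih =>
    rw [Nstar_eq_greedyStep ht hk]
    exact greedyStep_add_le (ih k.succ_pos)

theorem le_two_pow_mul_Nstar (hN : Even N) (hM : 2 ≤ M) (hNM : N ≤ 2 ^ M) (ht : 0 < t)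
    (htM : t ≤ M - 1) : N ≤ 2 ^ t * Nstar N M t := by
  induction htM using Nat.decreasingInduction with
  | self =>
    rw [Nstar_sub_one hM, ← pow_succ, Nat.sub_add_cancel (by omega)]
    exact hNM
  | of_succ k hk ih =>
    rw [Nstar_eq_greedyStep ht hk]
    exact le_two_pow_mul_greedyStep hN (even_Nstar hN) (two_le_Nstar k.succ_pos) (ih k.succ_pos)

theorem Nstar_succ_add_two_le (hM : 2 ≤ M) (h2M : 2 * M ≤ N) (htM : t < M - 1) :
    Nstar N M (t + 1) + 2 ≤ Nstar N M t := by
  rcases Nat.eq_zero_or_pos t with rfl | ht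
  · simpa [Nstar] using Nstar_add_two_mul_le (t := 1) hM h2M one_pos (by omega)
  · rw [Nstar_eq_greedyStep ht htM]
    exact add_two_le_greedyStep (two_le_Nstar t.succ_pos) t.succ_pos
      (Nstar_add_two_mul_le hM h2M t.succ_pos htM)

theorem Nstar_le_two_mul_Nstar_succ (hN : Even N) (hM : 2 ≤ M) (hNM : N ≤ 2 ^ M)
    (htM : t < M - 1) : Nstar N M t ≤ 2 * Nstar N M (t + 1) := by
  rcases Nat.eq_zero_or_pos t with rfl | ht
  · simpa [Nstar] using le_two_pow_mul_Nstar (t := 1) hN hM hNM one_pos (by omega)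
  · rw [Nstar_eq_greedyStep ht htM]
    exact greedyStep_le_two_mul

end Nstar

theorem greedy_valid_general (N M : ℕ) (hN : Even N) (hM : 2 ≤ M)
    (hfeas : N / 2 ≤ 2 ^ (M - 1)) (hMN : M ≤ N / 2) :
    Nstar N M 0 = N ∧ Nstar N M (M - 1) = 2 ∧
    (∀ t ≤ M - 1, Even (Nstar N M t)) ∧
    (∀ t < M - 1, Nstar N M (t + 1) + 2 ≤ Nstar N M t) ∧
    (∀ t < M - 1, Nstar N M t ≤ 2 * Nstar N M (t + 1)) := by
  have h2M : 2 * M ≤ N := by omega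
  have hNM : N ≤ 2 ^ M := by
    obtain ⟨r, rfl⟩ := hN
    rw [← Nat.sub_add_cancel (by omega : 1 ≤ M), pow_succ]
    omega
  exact ⟨if_pos rfl, Nstar_sub_one hM, fun _ _ => even_Nstar hN,
    fun _ ht => Nstar_succ_add_two_le hM h2M ht,
    fun _ ht => Nstar_le_two_mul_Nstar_succ hN hM hNM ht⟩

/-- For even `N ≥ 2`, `M ≥ 2`, with `N/2 ≤ 2^(M-1)` and
`M ≤ N/2`, the greedy backward construction yields a valid elimination
schedule: it starts at `N`, ends at `2`, all terms are even, it decreases by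
at least `2` each round, and never more than halves. -/
theorem greedy_valid (N M : ℕ) (hN : Even N) (hN2 : 2 ≤ N) (hM : 2 ≤ M)
    (hfeas : N / 2 ≤ 2 ^ (M - 1)) (hMN : M ≤ N / 2) :
    Nstar N M 0 = N ∧ Nstar N M (M - 1) = 2 ∧
    (∀ t ≤ M - 1, Even (Nstar N M t)) ∧
    (∀ t < M - 1, Nstar N M (t + 1) + 2 ≤ Nstar N M t) ∧
    (∀ t < M - 1, Nstar N M t ≤ 2 * Nstar N M (t + 1)) :=
  greedy_valid_general N M hN hM hfeas hMN
end

section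
/- For even N ≥ 4, there exists a sequence N_0 = N > N_1 > ... > N_{M-1} = 2 of even integers with N_t ≤ 2·N_{t+1} for all t if and only if ⌈log_2(N/2)⌉ ≤ M - 1 ≤ (N-2)/2. -/
/-- For even `N ≥ 4` and `M ≥ 2`, a valid elimination schedule
(strictly decreasing even sequence from `N` to `2` of length `M`, each term at
most double its successor) exists iff `⌈log₂(N/2)⌉ ≤ M - 1 ≤ (N-2)/2`. -/
theorem schedule_exists_iff (N M : ℕ) (hN : Even N) (hN4 : 4 ≤ N) (hM : 2 ≤ M) :
    (∃ Ns : ℕ → ℕ,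
        Ns 0 = N ∧ Ns (M - 1) = 2 ∧
        (∀ t ≤ M - 1, Even (Ns t)) ∧
        (∀ t < M - 1, Ns (t + 1) < Ns t) ∧
        (∀ t < M - 1, Ns t ≤ 2 * Ns (t + 1)))
      ↔ (Nat.clog 2 (N / 2) ≤ M - 1 ∧ M - 1 ≤ (N - 2) / 2) := by
  set K := M - 1 with hKdef
  have hK1 : 1 ≤ K := by omega
  constructor
  · rintro ⟨Ns, h0, hK2, hev, hdec, hdbl⟩
    have step2 : ∀ t, t < K → Ns (t + 1) + 2 ≤ Ns t := by
      intro t ht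
      obtain ⟨a, ha⟩ := hev t (by omega)
      obtain ⟨b, hb⟩ := hev (t + 1) (by omega)
      have := hdec t ht
      omega
    have claimA : ∀ s, s ≤ K → Ns (K - s) ≤ 2 ^ s * 2 := by
      intro s
      induction s with
      | zero => intro _; simp [hK2]
      | succ s ih =>
        intro hs
        have h1 : K - (s + 1) + 1 = K - s := by omega
        have h2 := hdbl (K - (s + 1)) (by omega)
        rw [h1] at h2
        have h3 := ih (by omega)
        rw [pow_succ]
        omega
    have claimB : ∀ s, s ≤ K → 2 + 2 * s ≤ Ns (K - s) := by
      intro s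
      induction s with
      | zero => intro _; simp [hK2]
      | succ s ih =>
        intro hs
        have h1 : K - (s + 1) + 1 = K - s := by omega
        have h2 := step2 (K - (s + 1)) (by omega)
        rw [h1] at h2
        have h3 := ih (by omega)
        omega
    have hA := claimA K le_rfl
    have hB := claimB K le_rfl
    rw [Nat.sub_self, h0] at hA hB
    constructor
    · rw [Nat.clog_le_iff_le_pow (by norm_num)]
      omega
    · omega
  · rintro ⟨h1, h2⟩
    rw [Nat.clog_le_iff_le_pow (by norm_num)] at h1
    have hNle : N ≤ 2 ^ K * 2 := by
      obtain ⟨n, hn⟩ := hN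
      omega
    have hKN : 2 * K + 2 ≤ N := by omega
    refine ⟨fun t => min (2 ^ (K - t) * 2) (N - 2 * t), ?_, ?_, ?_, ?_, ?_⟩
    · show min (2 ^ (K - 0) * 2) (N - 2 * 0) = N
      simp only [Nat.sub_zero, Nat.mul_zero]
      omega
    · show min (2 ^ (K - K) * 2) (N - 2 * K) = 2
      rw [Nat.sub_self, pow_zero, one_mul]
      omega
    · intro t ht
      show Even (min (2 ^ (K - t) * 2) (N - 2 * t))
      obtain ⟨n, hn⟩ := hN
      rcases le_total (2 ^ (K - t) * 2) (N - 2 * t) with h | h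
      · rw [min_eq_left h]; exact ⟨2 ^ (K - t), by ring⟩
      · rw [min_eq_right h]; exact ⟨n - t, by omega⟩
    · intro t ht
      show min (2 ^ (K - (t + 1)) * 2) (N - 2 * (t + 1)) < min (2 ^ (K - t) * 2) (N - 2 * t)
      set p := 2 ^ (K - (t + 1)) with hpdef
      have hp : 1 ≤ p := Nat.one_le_two_pow
      have hpow : 2 ^ (K - t) = p * 2 := by
        rw [hpdef, ← pow_succ]; congr 1; omega
      rw [hpow]
      omega
    · intro t ht
      show min (2 ^ (K - t) * 2) (N - 2 * t) ≤ 2 * min (2 ^ (K - (t + 1)) * 2) (N - 2 * (t + 1))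
      set p := 2 ^ (K - (t + 1)) with hpdef
      have hp : 1 ≤ p := Nat.one_le_two_pow
      have hpow : 2 ^ (K - t) = p * 2 := by
        rw [hpdef, ← pow_succ]; congr 1; omega
      rw [hpow]
      omega
end
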